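/- arXiv:2006.13557 — 3 statements merged into one kernel-verified Lean document; each statement's English description precedes it below -/
import Mathlib

section
/- In a binary span tree over [1, n], for every index i ∈ [1, n], the set of spans in S(T) that have i as an endpoint (i.e., spans (a, b) with a = i or b = i) is nonempty and totally ordered by interval inclusion. -/
/-- A full binary tree over the leaf interval `[i, j]`: a leaf covers `[i, i]`,
and an internal node covering `[i, j]` splits at point `k` (`i ≤ k < j`) into
children covering `[i, k]` and `[k+1, j]`. -/
inductive SpanTree : ℕ → ℕ → Type where
  | leaf (i : ℕ) : SpanTree i i
  | node {i k j : ℕ} (h1 : i ≤ k) (h2 : k < j)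
      (l : SpanTree i k) (r : SpanTree (k + 1) j) : SpanTree i j

/-- The set `S(T)` of (non-singleton) spans of internal nodes of the tree. -/
def SpanTree.spans : ∀ {i j : ℕ}, SpanTree i j → Set (ℕ × ℕ)
  | _, _, .leaf _ => ∅
  | i, j, .node _ _ l r => insert (i, j) (l.spans ∪ r.spans)

/-- The set of splits `(i, k, j)` of internal nodes: node covering `(i, j)`
split at point `k` into children covering `(i, k)` and `(k+1, j)`. -/
def SpanTree.splits : ∀ {a b : ℕ}, SpanTree a b → Set (ℕ × ℕ × ℕ)
  | _, _, .leaf _ => ∅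
  | _, _, @SpanTree.node i k j _ _ l r => insert (i, k, j) (l.splits ∪ r.splits)

/-- Interval inclusion: the span `s` is a (not necessarily proper) subinterval of `t`. -/
def SpanSub (s t : ℕ × ℕ) : Prop := t.1 ≤ s.1 ∧ s.2 ≤ t.2

/-- `i` is an endpoint of the span `s`. -/
def HasEndpoint (s : ℕ × ℕ) (i : ℕ) : Prop := s.1 = i ∨ s.2 = i

/-- `s` is the inclusion-largest span of `T` having `i` as an endpoint. -/
def IsLargestAt {a b : ℕ} (T : SpanTree a b) (i : ℕ) (s : ℕ × ℕ) : Prop :=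
  s ∈ T.spans ∧ HasEndpoint s i ∧ ∀ t ∈ T.spans, HasEndpoint t i → SpanSub t s

lemma SpanTree.spans_bounds : ∀ {a b : ℕ} (T : SpanTree a b), ∀ s ∈ T.spans,
    a ≤ s.1 ∧ s.1 < s.2 ∧ s.2 ≤ b := by
  intro a b T
  induction T with
  | leaf i => intro s hs; cases hs
  | node h1 h2 l r ihl ihr =>
    intro s hs
    rcases hs with rfl | hs | hs
    · exact ⟨le_rfl, lt_of_le_of_lt h1 h2, le_rfl⟩
    · obtain ⟨ha, hlt, hb⟩ := ihl s hs
      exact ⟨ha, hlt, hb.trans h2.le⟩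
    · obtain ⟨ha, hlt, hb⟩ := ihr s hs
      exact ⟨le_trans (h1.trans (Nat.le_succ _)) ha, hlt, hb⟩

lemma SpanTree.exists_endpoint : ∀ {a b : ℕ} (T : SpanTree a b) (i : ℕ),
    a < b → a ≤ i → i ≤ b → ∃ s ∈ T.spans, HasEndpoint s i := by
  intro a b T
  induction T with
  | leaf j => intro i hab _ _; exact absurd hab (lt_irrefl _)
  | node h1 h2 l r ihl ihr =>
    rename_i a k b
    intro i hab hai hib
    rcases eq_or_lt_of_le hai with rfl | hai'
    · exact ⟨(a, b), Set.mem_insert _ _, Or.inl rfl⟩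
    rcases eq_or_lt_of_le hib with rfl | hib'
    · exact ⟨(a, i), Set.mem_insert _ _, Or.inr rfl⟩
    by_cases hk : i ≤ k
    · have hak : a < k := lt_of_lt_of_le hai' hk
      obtain ⟨s, hs, he⟩ := ihl i hak (le_of_lt hai') hk
      exact ⟨s, Or.inr (Or.inl hs), he⟩
    · push_neg at hk
      have : k + 1 < b := by
        rcases eq_or_lt_of_le (Nat.succ_le_of_lt hk) with h | h
        · omega
        · omega
      obtain ⟨s, hs, he⟩ := ihr i this (Nat.succ_le_of_lt hk) (le_of_lt hib')
      exact ⟨s, Or.inr (Or.inr hs), he⟩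

lemma SpanTree.chain_at : ∀ {a b : ℕ} (T : SpanTree a b) (i : ℕ),
    ∀ s ∈ T.spans, ∀ t ∈ T.spans, HasEndpoint s i → HasEndpoint t i →
      SpanSub s t ∨ SpanSub t s := by
  intro a b T
  induction T with
  | leaf j => intro i s hs; cases hs
  | node h1 h2 l r ihl ihr =>
    rename_i a k b
    intro i s hs t ht hes het
    have bnd : ∀ u ∈ (SpanTree.node h1 h2 l r).spans, a ≤ u.1 ∧ u.1 < u.2 ∧ u.2 ≤ b :=
      SpanTree.spans_bounds _
    rcases hs with rfl | hs | hs
    · right; obtain ⟨h, _, h'⟩ := bnd t ht; exact ⟨h, h'⟩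
    all_goals rcases ht with rfl | ht | ht
    · left; obtain ⟨h, _, h'⟩ := bnd s (Or.inr (Or.inl hs)); exact ⟨h, h'⟩
    · exact ihl i s hs t ht hes het
    · -- s in left, t in right: contradiction via endpoint
      exfalso
      obtain ⟨_, hslt, hsk⟩ := l.spans_bounds s hs
      obtain ⟨htk, htlt, _⟩ := r.spans_bounds t ht
      have his : i ≤ k := by rcases hes with h | h <;> omega
      have hit : k + 1 ≤ i := by rcases het with h | h <;> omega
      omega
    · left; obtain ⟨h, _, h'⟩ := bnd s (Or.inr (Or.inr hs)); exact ⟨h, h'⟩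
    · exfalso
      obtain ⟨_, htlt, htk⟩ := l.spans_bounds t ht
      obtain ⟨hsk, hslt, _⟩ := r.spans_bounds s hs
      have hit : i ≤ k := by rcases het with h | h <;> omega
      have his : k + 1 ≤ i := by rcases hes with h | h <;> omega
      omega
    · exact ihr i s hs t ht hes het

/-- For every index `i ∈ [1, n]`, the spans of `T` having `i` as an endpoint
form a nonempty family that is totally ordered by interval inclusion. -/
theorem spans_with_endpoint_nonempty_chain (n : ℕ) (hn : 2 ≤ n) (T : SpanTree 1 n)
    (i : ℕ) (h1 : 1 ≤ i) (h2 : i ≤ n) :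
    (∃ s ∈ T.spans, HasEndpoint s i) ∧
    (∀ s ∈ T.spans, ∀ t ∈ T.spans,
      HasEndpoint s i → HasEndpoint t i → SpanSub s t ∨ SpanSub t s) := by
  refine ⟨T.exists_endpoint i (lt_of_lt_of_le one_lt_two hn) h1 h2, ?_⟩
  intro s hs t ht hes het
  exact T.chain_at i s hs t ht hes het
end

section
/- Let T be a binary span tree over [1, n] with n ≥ 2, and for each i ∈ [1, n−1] let M(i) ∈ S(T) denote the largest span of T having i as an endpoint. Then the map M is injective on {1, …, n−1}: for i ≠ j in [1, n−1], M(i) ≠ M(j). -/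
/-- Every non-root span has a strictly larger parent sharing one endpoint. -/
theorem parent_exists : ∀ {a b : ℕ} (T : SpanTree a b) (s : ℕ × ℕ),
    s ∈ T.spans → s ≠ (a, b) →
    ∃ p ∈ T.spans, (p.1 = s.1 ∧ s.2 < p.2) ∨ (p.1 < s.1 ∧ p.2 = s.2) := by
  intro a b T
  induction T with
  | leaf i => intro s hs; exact absurd hs (by simp [SpanTree.spans])
  | @node i k j h1 h2 l r ihl ihr =>
    intro s hs hne
    rcases hs with h | h | h
    · exact absurd h hne
    · by_cases hsl : s = (i, k)
      · exact ⟨(i, j), Or.inl rfl, Or.inl ⟨by simp [hsl], by simp [hsl]; omega⟩⟩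
      · obtain ⟨p, hp, hc⟩ := ihl s h hsl
        exact ⟨p, Or.inr (Or.inl hp), hc⟩
    · by_cases hsr : s = (k + 1, j)
      · exact ⟨(i, j), Or.inl rfl, Or.inr ⟨by simp [hsr]; omega, by simp [hsr]⟩⟩
      · obtain ⟨p, hp, hc⟩ := ihr s h hsr
        exact ⟨p, Or.inr (Or.inr hp), hc⟩

/-- The map `i ↦ M(i)` (largest span with endpoint `i`) is injective on `[1, n-1]`. -/
theorem largest_span_injective (n : ℕ) (hn : 2 ≤ n) (T : SpanTree 1 n)
    (M : ℕ → ℕ × ℕ) (hM : ∀ i ∈ Set.Icc 1 (n - 1), IsLargestAt T i (M i)) :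
    ∀ i ∈ Set.Icc 1 (n - 1), ∀ j ∈ Set.Icc 1 (n - 1), i ≠ j → M i ≠ M j := by
  intro i hi j hj hij heq
  obtain ⟨hsi, hepi, hmaxi⟩ := hM i hi
  obtain ⟨hsj, hepj, hmaxj⟩ := hM j hj
  set s := M i with hs
  rw [← heq] at hepj hmaxj
  -- determine endpoints
  have hs2 : s.2 ≤ n - 1 := by
    rcases hepi with h1 | h1 <;> rcases hepj with h2 | h2
    · exact absurd (h1.symm.trans h2) hij
    · exact h2 ▸ hj.2
    · exact h1 ▸ hi.2
    · exact absurd (h1.symm.trans h2) hij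
  have hsne : s ≠ (1, n) := by
    intro h
    have : s.2 = n := by rw [h]
    omega
  obtain ⟨p, hp, hcase⟩ := parent_exists T s hsi hsne
  -- p shares an endpoint with s; that endpoint is i or j
  rcases hcase with ⟨he, hlt⟩ | ⟨hlt, he⟩
  · have hepp : HasEndpoint p s.1 := Or.inl he
    rcases hepi with h1 | h1
    · have := hmaxi p hp (h1 ▸ hepp); exact absurd this.2 (by omega)
    · rcases hepj with h2 | h2
      · have := hmaxj p hp (h2 ▸ hepp); exact absurd this.2 (by omega)
      · exact absurd (h1.symm.trans h2) hij
  · have hepp : HasEndpoint p s.2 := Or.inr he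
    rcases hepi with h1 | h1
    · rcases hepj with h2 | h2
      · exact absurd (h1.symm.trans h2) hij
      · have := hmaxj p hp (h2 ▸ hepp); exact absurd this.1 (by omega)
    · have := hmaxi p hp (h1 ▸ hepp); exact absurd this.1 (by omega)
end

section
/- Greedy decoding correctness: let T be a binary span tree over [1, n], and define scores ρ(i → j) = 1 if the largest span of T with endpoint i is exactly (min(i,j), max(i,j)), and ρ(i → j) = 0 otherwise. For each span (i, j) ∈ S(T) (with i < j), the split score s(i, k, j) = ρ(k → i) + ρ(k+1 → j) is uniquely maximized over k ∈ [i, j−1] at the true split point of (i, j) in T, where for singleton cases (k = i or k+1 = j) the corresponding ρ-term is replaced by the constant 1. -/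
lemma SpanTree.spans_sub : ∀ {a b : ℕ} (T : SpanTree a b), ∀ t ∈ T.spans, a ≤ t.1 ∧ t.2 ≤ b
  | _, _, .leaf _ => by simp [SpanTree.spans]
  | _, _, @SpanTree.node i k j h1 h2 l r => by
    intro t ht
    simp only [SpanTree.spans, Set.mem_insert_iff, Set.mem_union] at ht
    rcases ht with rfl | h | h
    · simp
    · have := l.spans_sub t h; omega
    · have := r.spans_sub t h; omega

lemma SpanTree.spans_lt : ∀ {a b : ℕ} (T : SpanTree a b), ∀ t ∈ T.spans, t.1 < t.2
  | _, _, .leaf _ => by simp [SpanTree.spans]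
  | _, _, @SpanTree.node i k j h1 h2 l r => by
    intro t ht
    simp only [SpanTree.spans, Set.mem_insert_iff, Set.mem_union] at ht
    rcases ht with rfl | h | h
    · simpa using h2.trans_le' h1
    · exact l.spans_lt t h
    · exact r.spans_lt t h

lemma SpanTree.spans_laminar : ∀ {a b : ℕ} (T : SpanTree a b), ∀ s ∈ T.spans, ∀ t ∈ T.spans,
    (t.1 ≤ s.1 ∧ s.2 ≤ t.2) ∨ (s.1 ≤ t.1 ∧ t.2 ≤ s.2) ∨ s.2 < t.1 ∨ t.2 < s.1
  | _, _, .leaf _ => by simp [SpanTree.spans]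
  | _, _, @SpanTree.node i k j h1 h2 l r => by
    intro s hs t ht
    simp only [SpanTree.spans, Set.mem_insert_iff, Set.mem_union] at hs ht
    rcases hs with rfl | hs | hs <;> rcases ht with rfl | ht | ht
    · left; simp
    · have := l.spans_sub t ht; omega
    · have := r.spans_sub t ht; omega
    · have := l.spans_sub s hs; omega
    · exact l.spans_laminar s hs t ht
    · have hA := l.spans_sub s hs; have hB := r.spans_sub t ht; omega
    · have := r.spans_sub s hs; omega
    · have hA := r.spans_sub s hs; have hB := l.spans_sub t ht; omega
    · exact r.spans_laminar s hs t ht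

lemma SpanTree.root_mem : ∀ {a b : ℕ} (T : SpanTree a b), a < b → (a, b) ∈ T.spans
  | _, _, .leaf _ => by intro h; omega
  | _, _, @SpanTree.node i k j h1 h2 l r => by
    intro _; simp [SpanTree.spans]

lemma SpanTree.splits_spec : ∀ {a b : ℕ} (T : SpanTree a b), ∀ i k j, (i, k, j) ∈ T.splits →
    a ≤ i ∧ i ≤ k ∧ k < j ∧ j ≤ b ∧ (i, j) ∈ T.spans ∧
    (i < k → (i, k) ∈ T.spans) ∧ (k + 1 < j → (k + 1, j) ∈ T.spans)
  | _, _, .leaf _ => by simp [SpanTree.splits]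
  | _, _, @SpanTree.node i0 k0 j0 h1 h2 l r => by
    intro i k j h
    simp only [SpanTree.splits, Set.mem_insert_iff, Set.mem_union] at h
    rcases h with h | h | h
    · obtain ⟨rfl, rfl, rfl⟩ : i = i0 ∧ k = k0 ∧ j = j0 := by
        simpa [Prod.ext_iff] using h
      refine ⟨le_rfl, h1, h2, le_rfl, by simp [SpanTree.spans], ?_, ?_⟩
      · intro hlt
        simp only [SpanTree.spans, Set.mem_insert_iff, Set.mem_union]
        exact Or.inr (Or.inl (l.root_mem hlt))
      · intro hlt
        simp only [SpanTree.spans, Set.mem_insert_iff, Set.mem_union]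
        exact Or.inr (Or.inr (r.root_mem hlt))
    · obtain ⟨ha, hb, hc, hd, he, hf, hg⟩ := l.splits_spec i k j h
      simp only [SpanTree.spans, Set.mem_insert_iff, Set.mem_union]
      exact ⟨ha, hb, hc, by omega, Or.inr (Or.inl he),
        fun hh => Or.inr (Or.inl (hf hh)), fun hh => Or.inr (Or.inl (hg hh))⟩
    · obtain ⟨ha, hb, hc, hd, he, hf, hg⟩ := r.splits_spec i k j h
      simp only [SpanTree.spans, Set.mem_insert_iff, Set.mem_union]
      exact ⟨by omega, hb, hc, hd, Or.inr (Or.inr he),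
        fun hh => Or.inr (Or.inr (hf hh)), fun hh => Or.inr (Or.inr (hg hh))⟩
/-- Greedy decoding correctness: with pointing scores `ρ(i → j) = 1` iff the
largest span with endpoint `i` is exactly `(min i j, max i j)` (else `0`), and
split score `s(i,k,j) = ρ(k → i) + ρ(k+1 → j)` where singleton cases (`k = i`
or `k+1 = j`) replace the corresponding term by `1`, the split score of any
span `(i, j) ∈ S(T)` is uniquely maximized at the true split point of `(i, j)`. -/
theorem greedy_decoding_correct (n : ℕ) (T : SpanTree 1 n)
    (M : ℕ → ℕ × ℕ) (hM : ∀ i ∈ Set.Icc 1 n, IsLargestAt T i (M i))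
    (ρ : ℕ → ℕ → ℝ)
    (hρ : ∀ i j, ρ i j = if M i = (min i j, max i j) then 1 else 0)
    (s : ℕ → ℕ → ℕ → ℝ)
    (hs : ∀ i k j, s i k j =
      (if k = i then 1 else ρ k i) + (if k + 1 = j then 1 else ρ (k + 1) j))
    (i kstar j : ℕ) (hsplit : (i, kstar, j) ∈ T.splits) :
    ∀ k, i ≤ k → k < j → k ≠ kstar → s i k j < s i kstar j := by
  obtain ⟨hai, hik, hkj, hjb, hij_mem, hL_mem, hR_mem⟩ := T.splits_spec i kstar j hsplit
  -- the largest span ending at kstar is (i, kstar), when i < kstar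
  have hL : i < kstar → M kstar = (i, kstar) := by
    intro hlt
    obtain ⟨hmem, hend, hmax⟩ := hM kstar ⟨by omega, by omega⟩
    have hsub := hmax (i, kstar) (hL_mem hlt) (Or.inr rfl)
    simp only [SpanSub] at hsub
    have hltMk := T.spans_lt _ hmem
    have hlam := T.spans_laminar _ hmem _ hij_mem
    rcases hend with he | he <;> rw [Prod.ext_iff] <;>
      constructor <;> simp only at * <;> omega
  -- the largest span starting at kstar+1 is (kstar+1, j), when kstar+1 < j
  have hR : kstar + 1 < j → M (kstar + 1) = (kstar + 1, j) := by
    intro hlt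
    obtain ⟨hmem, hend, hmax⟩ := hM (kstar + 1) ⟨by omega, by omega⟩
    have hsub := hmax (kstar + 1, j) (hR_mem hlt) (Or.inl rfl)
    simp only [SpanSub] at hsub
    have hltMk := T.spans_lt _ hmem
    have hlam := T.spans_laminar _ hmem _ hij_mem
    rcases hend with he | he <;> rw [Prod.ext_iff] <;>
      constructor <;> simp only at * <;> omega
  -- no span (i, k) for kstar < k < j
  have hCk : ∀ k, kstar < k → k < j → (i, k) ∉ T.spans := by
    intro k hk1 hk2 hmem
    have hlam := T.spans_laminar _ hmem _ (hR_mem (by omega))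
    simp only at hlam; omega
  -- no span (k+1, j) for i ≤ k < kstar
  have hCk' : ∀ k, i ≤ k → k < kstar → (k + 1, j) ∉ T.spans := by
    intro k hk1 hk2 hmem
    have hlam := T.spans_laminar _ hmem _ (hL_mem (by omega))
    simp only at hlam; omega
  -- star term 1 equals 1
  have h1 : (if kstar = i then (1:ℝ) else ρ kstar i) = 1 := by
    by_cases h : kstar = i
    · simp [h]
    · have hlt : i < kstar := by omega
      have hMe : M kstar = (min kstar i, max kstar i) := by
        rw [hL hlt]; rw [Prod.ext_iff]; constructor <;> simp <;> omega
      simp [h, hρ, hMe]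
  -- star term 2 equals 1
  have h2 : (if kstar + 1 = j then (1:ℝ) else ρ (kstar + 1) j) = 1 := by
    by_cases h : kstar + 1 = j
    · simp [h]
    · have hlt : kstar + 1 < j := by omega
      have hMe : M (kstar + 1) = (min (kstar + 1) j, max (kstar + 1) j) := by
        rw [hR hlt]; rw [Prod.ext_iff]; constructor <;> simp <;> omega
      simp [h, hρ, hMe]
  intro k hik' hkj' hne
  rw [hs, hs, h1, h2]
  have hbound1 : (if k = i then (1:ℝ) else ρ k i) ≤ 1 := by
    split_ifs with h
    · exact le_refl 1
    · rw [hρ]; split_ifs <;> norm_num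
  have hbound2 : (if k + 1 = j then (1:ℝ) else ρ (k + 1) j) ≤ 1 := by
    split_ifs with h
    · exact le_refl 1
    · rw [hρ]; split_ifs <;> norm_num
  rcases lt_or_gt_of_ne hne with hlt | hgt
  · -- k < kstar : second term is 0
    have hne2 : k + 1 ≠ j := by omega
    have hz : ρ (k + 1) j = 0 := by
      rw [hρ, if_neg]
      intro hMe
      have hmem := (hM (k + 1) ⟨by omega, by omega⟩).1
      rw [hMe] at hmem
      have : (k + 1, j) ∈ T.spans := by
        have h1 : min (k + 1) j = k + 1 := by omega
        have h2 : max (k + 1) j = j := by omega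
        rwa [h1, h2] at hmem
      exact hCk' k hik' hlt this
    rw [if_neg hne2, hz]
    linarith
  · -- kstar < k : first term is 0
    have hne1 : k ≠ i := by omega
    have hz : ρ k i = 0 := by
      rw [hρ, if_neg]
      intro hMe
      have hmem := (hM k ⟨by omega, by omega⟩).1
      rw [hMe] at hmem
      have : (i, k) ∈ T.spans := by
        have h1 : min k i = i := by omega
        have h2 : max k i = k := by omega
        rwa [h1, h2] at hmem
      exact hCk k hgt hkj' this
    rw [if_neg hne1, hz]
    linarith
end
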